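/- arXiv:2510.22579 — 2 statements merged into one kernel-verified Lean document; each statement's English description precedes it below -/
import Mathlib

section
/- Let {η_t} be a positive non-increasing sequence, D > 0, and let {x_t}, {x*_t} be points in a convex set of diameter D. Then Σ_{t=1}^{T-1} [‖x_{t+1} − x*_{t+1}‖²/η_{t+1} − ‖x_{t+1} − x*_t‖²/η_t] ≤ D²(1/η_T − 1/η_1) + 2D·Σ_{t=1}^{T-1} ‖x*_{t+1} − x*_t‖/η_{t+1}. -/
/-! Write `a = x_{t+1} - x*_{t+1}` and `b = x_{t+1} - x*_t`, so that `a - b = x*_t - x*_{t+1}`.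
Each summand splits as `‖a‖²(1/η_{t+1} - 1/η_t) + (‖a‖² - ‖b‖²)/η_t`. The first part is at most
`D²(1/η_{t+1} - 1/η_t)`, which telescopes to `D²(1/η_T - 1/η_1)`; the second is at most
`(‖a‖ + ‖b‖)‖a - b‖/η_t ≤ 2D‖a - b‖/η_{t+1}`. -/

open Finset

theorem sq_norm_sub_sq_norm_le {E : Type*} [SeminormedAddCommGroup E] {a b : E} {D : ℝ}
    (ha : ‖a‖ ≤ D) (hb : ‖b‖ ≤ D) : ‖a‖ ^ 2 - ‖b‖ ^ 2 ≤ 2 * D * ‖a - b‖ :=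
  calc ‖a‖ ^ 2 - ‖b‖ ^ 2 = (‖a‖ + ‖b‖) * (‖a‖ - ‖b‖) := by ring
    _ ≤ (‖a‖ + ‖b‖) * ‖a - b‖ := by gcongr; exact norm_sub_norm_le a b
    _ ≤ 2 * D * ‖a - b‖ := by gcongr; linarith

theorem sq_norm_div_sub_sq_norm_div_le {E : Type*} [SeminormedAddCommGroup E] {a b : E}
    {D η η' : ℝ} (ha : ‖a‖ ≤ D) (hb : ‖b‖ ≤ D) (hη' : 0 < η') (hη'η : η' ≤ η) :
    ‖a‖ ^ 2 / η' - ‖b‖ ^ 2 / η ≤ D ^ 2 * (1 / η' - 1 / η) + 2 * D * (‖a - b‖ / η') := by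
  have hη : 0 < η := hη'.trans_le hη'η
  have hinv : 1 / η ≤ 1 / η' := one_div_le_one_div_of_le hη' hη'η
  have hD : 0 ≤ D := (norm_nonneg a).trans ha
  have hsplit : ‖a‖ ^ 2 / η' - ‖b‖ ^ 2 / η =
      ‖a‖ ^ 2 * (1 / η' - 1 / η) + (‖a‖ ^ 2 - ‖b‖ ^ 2) * (1 / η) := by
    ring
  have hfirst : ‖a‖ ^ 2 * (1 / η' - 1 / η) ≤ D ^ 2 * (1 / η' - 1 / η) := by gcongr
  have hsecond : (‖a‖ ^ 2 - ‖b‖ ^ 2) * (1 / η) ≤ 2 * D * ‖a - b‖ * (1 / η') :=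
    calc (‖a‖ ^ 2 - ‖b‖ ^ 2) * (1 / η) ≤ 2 * D * ‖a - b‖ * (1 / η) := by
          gcongr
          exact sq_norm_sub_sq_norm_le ha hb
      _ ≤ 2 * D * ‖a - b‖ * (1 / η') := by gcongr
  rw [hsplit]
  linarith [show 2 * D * ‖a - b‖ * (1 / η') = 2 * D * (‖a - b‖ / η') by ring]

theorem sum_Icc_one_sub_one_sub {M : Type*} [AddCommGroup M] (f : ℕ → M) {T : ℕ} (hT : 1 ≤ T) :
    ∑ t ∈ Icc 1 (T - 1), (f (t + 1) - f t) = f T - f 1 := by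
  obtain ⟨k, rfl⟩ : ∃ k, T = k + 1 := ⟨T - 1, by omega⟩
  rw [Nat.add_sub_cancel, ← Ico_add_one_right_eq_Icc, sum_Ico_sub f hT]

theorem stmt_10_general {n : ℕ} (η : ℕ → ℝ) (D : ℝ)
    (X : Set (EuclideanSpace ℝ (Fin n)))
    (hdiam : ∀ p ∈ X, ∀ q ∈ X, ‖p - q‖ ≤ D)
    (x xs : ℕ → EuclideanSpace ℝ (Fin n))
    (hx : ∀ t, x t ∈ X) (hxs : ∀ t, xs t ∈ X)
    (hηpos : ∀ t, 0 < η t) (hηmono : ∀ t : ℕ, η (t + 1) ≤ η t)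
    (T : ℕ) (hT : 1 ≤ T) :
    ∑ t ∈ Finset.Icc 1 (T - 1),
        (‖x (t + 1) - xs (t + 1)‖ ^ 2 / η (t + 1) -
          ‖x (t + 1) - xs t‖ ^ 2 / η t) ≤
      D ^ 2 * (1 / η T - 1 / η 1) +
        2 * D * ∑ t ∈ Finset.Icc 1 (T - 1), ‖xs (t + 1) - xs t‖ / η (t + 1) := by
  have hstep : ∀ t, ‖x (t + 1) - xs (t + 1)‖ ^ 2 / η (t + 1) - ‖x (t + 1) - xs t‖ ^ 2 / η t ≤
      D ^ 2 * (1 / η (t + 1) - 1 / η t) + 2 * D * (‖xs (t + 1) - xs t‖ / η (t + 1)) := by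
    intro t
    have h := sq_norm_div_sub_sq_norm_div_le (hdiam _ (hx (t + 1)) _ (hxs (t + 1)))
      (hdiam _ (hx (t + 1)) _ (hxs t)) (hηpos (t + 1)) (hηmono t)
    rwa [sub_sub_sub_cancel_left, norm_sub_rev (xs t)] at h
  calc _ ≤ ∑ t ∈ Icc 1 (T - 1),
          (D ^ 2 * (1 / η (t + 1) - 1 / η t) + 2 * D * (‖xs (t + 1) - xs t‖ / η (t + 1))) :=
        sum_le_sum fun t _ => hstep t
    _ = _ := by
      rw [sum_add_distrib, ← mul_sum, ← mul_sum, sum_Icc_one_sub_one_sub (fun t => 1 / η t) hT]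

theorem stmt_10 {n : ℕ} (η : ℕ → ℝ) (D : ℝ) (hD : 0 < D)
    (X : Set (EuclideanSpace ℝ (Fin n))) (hXconv : Convex ℝ X)
    (hdiam : ∀ p ∈ X, ∀ q ∈ X, ‖p - q‖ ≤ D)
    (x xs : ℕ → EuclideanSpace ℝ (Fin n))
    (hx : ∀ t, x t ∈ X) (hxs : ∀ t, xs t ∈ X)
    (hηpos : ∀ t, 0 < η t) (hηmono : ∀ t : ℕ, η (t + 1) ≤ η t)
    (T : ℕ) (hT : 1 ≤ T) :
    ∑ t ∈ Finset.Icc 1 (T - 1),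
        (‖x (t + 1) - xs (t + 1)‖ ^ 2 / η (t + 1) -
          ‖x (t + 1) - xs t‖ ^ 2 / η t) ≤
      D ^ 2 * (1 / η T - 1 / η 1) +
        2 * D * ∑ t ∈ Finset.Icc 1 (T - 1), ‖xs (t + 1) - xs t‖ / η (t + 1) :=
  stmt_10_general η D X hdiam x xs hx hxs hηpos hηmono T hT
end

section
/- For ε_τ ≥ 0 with partial sums E_τ = Σ_{s=1}^τ ε_s, constants C > 0 and D > 0 with ε_τ ≤ D⁻² for all τ, define γ_τ = E_{τ-1} + D⁻² and λ_τ = 1/(C·√(γ_τ + 1)·√(log(γ_τ+1)+1)·(log(log(γ_τ+1)+1)+1)). Then Σ_{τ=1}^t 2λ_τ²ε_τ ≤ 4/C² for all t ≥ 1. -/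
/-!
With `E_τ` the partial sums of `ε`, one has `λ_τ² = g(γ_τ) / C²` for the density
`g x = 1 / ((x+1) (log(x+1)+1) (log(log(x+1)+1)+1)²)`, whose antiderivative is
`F x = -1 / (log(log(x+1)+1)+1)`. Since `E_τ ≤ γ_τ` and `g` is decreasing, the term
`λ_τ² ε_τ` is at most `(E_τ - E_{τ-1}) g(E_τ) / C²`, a right-endpoint Riemann term bounded by
`(F(E_τ) - F(E_{τ-1})) / C²`. The sum telescopes, and `F` takes values in `[-1, 0)`.
-/

open Finset Real

noncomputable def logSucc (x : ℝ) : ℝ := log (x + 1) + 1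

noncomputable def logLogSucc (x : ℝ) : ℝ := log (logSucc x) + 1

noncomputable def logDensity (x : ℝ) : ℝ := ((x + 1) * logSucc x * logLogSucc x ^ 2)⁻¹

noncomputable def logPotential (x : ℝ) : ℝ := -(logLogSucc x)⁻¹

section

variable {a b x y : ℝ}

lemma one_le_logSucc (hx : 0 ≤ x) : 1 ≤ logSucc x := by
  have := log_nonneg (show 1 ≤ x + 1 by linarith)
  unfold logSucc; linarith

lemma logSucc_le_logSucc (ha : 0 ≤ a) (hab : a ≤ b) : logSucc a ≤ logSucc b := by
  unfold logSucc; gcongr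

lemma one_le_logLogSucc (hx : 0 ≤ x) : 1 ≤ logLogSucc x := by
  have := log_nonneg (one_le_logSucc hx)
  unfold logLogSucc; linarith

lemma logLogSucc_le_logLogSucc (ha : 0 ≤ a) (hab : a ≤ b) : logLogSucc a ≤ logLogSucc b := by
  have := one_le_logSucc ha
  unfold logLogSucc; gcongr; exact logSucc_le_logSucc ha hab

lemma sub_div_le_log_sub_log (hx : 0 < x) (hxy : x ≤ y) : (y - x) / y ≤ log y - log x := by
  have hy : 0 < y := hx.trans_le hxy
  have h := one_sub_inv_le_log_of_pos (div_pos hy hx)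
  rw [log_div hy.ne' hx.ne', inv_div] at h
  calc (y - x) / y = 1 - x / y := by field_simp
    _ ≤ log y - log x := h

lemma sub_div_le_logSucc_sub (ha : 0 ≤ a) (hab : a ≤ b) :
    (b - a) / (b + 1) ≤ logSucc b - logSucc a := by
  have h := sub_div_le_log_sub_log (show 0 < a + 1 by linarith) (show a + 1 ≤ b + 1 by linarith)
  unfold logSucc
  calc (b - a) / (b + 1) = (b + 1 - (a + 1)) / (b + 1) := by ring
    _ ≤ log (b + 1) - log (a + 1) := h
    _ = _ := by ring

lemma sub_div_le_logLogSucc_sub (ha : 0 ≤ a) (hab : a ≤ b) :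
    (b - a) / ((b + 1) * logSucc b) ≤ logLogSucc b - logLogSucc a := by
  have hb := one_le_logSucc (ha.trans hab)
  have h := sub_div_le_log_sub_log (by linarith [one_le_logSucc ha]) (logSucc_le_logSucc ha hab)
  unfold logLogSucc
  calc (b - a) / ((b + 1) * logSucc b) = (b - a) / (b + 1) / logSucc b := by rw [div_div]
    _ ≤ (logSucc b - logSucc a) / logSucc b := by
        gcongr; exact sub_div_le_logSucc_sub ha hab
    _ ≤ log (logSucc b) + 1 - (log (logSucc a) + 1) := by linarith

/-- `logPotential` is an antiderivative of the decreasing function `logDensity`. -/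
lemma sub_mul_logDensity_le (ha : 0 ≤ a) (hab : a ≤ b) :
    (b - a) * logDensity b ≤ logPotential b - logPotential a := by
  have hLa := one_le_logLogSucc ha
  have hLb := one_le_logLogSucc (ha.trans hab)
  have hLab := logLogSucc_le_logLogSucc ha hab
  have hab' : 0 ≤ logLogSucc b - logLogSucc a := by linarith
  calc (b - a) * logDensity b
        = (b - a) / ((b + 1) * logSucc b) / logLogSucc b ^ 2 := by
          unfold logDensity; field_simp
    _ ≤ (logLogSucc b - logLogSucc a) / logLogSucc b ^ 2 := by
          gcongr; exact sub_div_le_logLogSucc_sub ha hab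
    _ ≤ (logLogSucc b - logLogSucc a) / (logLogSucc a * logLogSucc b) := by
          rw [sq]; gcongr
    _ = logPotential b - logPotential a := by
          unfold logPotential; field_simp; ring

lemma logDensity_le_logDensity (ha : 0 ≤ a) (hab : a ≤ b) : logDensity b ≤ logDensity a := by
  have := one_le_logSucc ha
  have := one_le_logLogSucc ha
  have := logSucc_le_logSucc ha hab
  have := logLogSucc_le_logLogSucc ha hab
  unfold logDensity
  gcongr
  exacts [mul_nonneg (by linarith) (by linarith), by linarith]

lemma logPotential_sub_logPotential_zero_le_one (hx : 0 ≤ x) :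
    logPotential x - logPotential 0 ≤ 1 := by
  have h0 : logPotential 0 = -1 := by simp [logPotential, logLogSucc, logSucc]
  have : 0 < logLogSucc x := by linarith [one_le_logLogSucc hx]
  rw [h0, logPotential]
  linarith [inv_pos.mpr this]

lemma sq_one_div_mul_sqrt_eq_logDensity_div (C : ℝ) (hx : 0 ≤ x) :
    (1 / (C * √(x + 1) * √(log (x + 1) + 1) * (log (log (x + 1) + 1) + 1))) ^ 2
      = logDensity x / C ^ 2 := by
  have := one_le_logSucc hx
  unfold logDensity logLogSucc logSucc at *
  rw [div_pow, mul_pow, mul_pow, mul_pow, sq_sqrt (by linarith), sq_sqrt (by linarith)]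
  field_simp

end

lemma sum_Icc_sub_mul_le_sub {x : ℕ → ℝ} {g F : ℝ → ℝ} (hx0 : 0 ≤ x 0) (hx : Monotone x)
    (hF : ∀ a b, 0 ≤ a → a ≤ b → (b - a) * g b ≤ F b - F a) (t : ℕ) :
    ∑ τ ∈ Icc 1 t, (x τ - x (τ - 1)) * g (x τ) ≤ F (x t) - F (x 0) := by
  induction t with
  | zero => simp
  | succ t ih =>
    rw [sum_Icc_succ_top (by omega), Nat.add_sub_cancel]
    have := hF (x t) (x (t + 1)) (hx0.trans (hx t.zero_le)) (hx t.le_succ)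
    linarith

theorem stmt_16_general (ε : ℕ → ℝ) (C D : ℝ)
    (hε0 : ∀ τ, 0 ≤ ε τ) (hεD : ∀ τ, ε τ ≤ D⁻¹ ^ 2)
    (γ lam : ℕ → ℝ)
    (hγ : ∀ τ : ℕ, γ τ = (∑ s ∈ Finset.Icc 1 (τ - 1), ε s) + D⁻¹ ^ 2)
    (hlam : ∀ τ, lam τ = 1 / (C * Real.sqrt (γ τ + 1) *
      Real.sqrt (Real.log (γ τ + 1) + 1) *
      (Real.log (Real.log (γ τ + 1) + 1) + 1))) :
    ∀ t : ℕ, 1 ≤ t →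
      ∑ τ ∈ Finset.Icc 1 t, 2 * (lam τ) ^ 2 * ε τ ≤ 4 / C ^ 2 := by
  intro t _
  set E : ℕ → ℝ := fun τ => ∑ s ∈ Icc 1 τ, ε s with hE
  have hE0 : E 0 = 0 := by simp [hE]
  have hE_mono : Monotone E := fun m n hmn =>
    sum_le_sum_of_subset_of_nonneg (Icc_subset_Icc le_rfl hmn) fun s _ _ => hε0 s
  have hE_step : ∀ τ, 1 ≤ τ → E τ = E (τ - 1) + ε τ := by
    intro τ hτ
    obtain ⟨n, rfl⟩ := Nat.exists_eq_add_of_le' hτ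
    simp only [hE, sum_Icc_succ_top (by omega : 1 ≤ n + 1), Nat.add_sub_cancel]
  have hterm : ∀ τ ∈ Icc 1 t,
      2 * lam τ ^ 2 * ε τ ≤ 2 / C ^ 2 * ((E τ - E (τ - 1)) * logDensity (E τ)) := by
    intro τ hτ
    have hτ1 := (mem_Icc.mp hτ).1
    have hEτ := hE_step τ hτ1
    have hE_nonneg : 0 ≤ E τ := hE0 ▸ hE_mono τ.zero_le
    have hE_le_γ : E τ ≤ γ τ := by rw [hEτ, hγ]; linarith [hεD τ]
    calc 2 * lam τ ^ 2 * ε τ = 2 / C ^ 2 * (ε τ * logDensity (γ τ)) := by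
          rw [hlam, sq_one_div_mul_sqrt_eq_logDensity_div C (hE_nonneg.trans hE_le_γ)]; ring
      _ ≤ 2 / C ^ 2 * (ε τ * logDensity (E τ)) := by
          gcongr
          · exact hε0 τ
          · exact logDensity_le_logDensity hE_nonneg hE_le_γ
      _ = 2 / C ^ 2 * ((E τ - E (τ - 1)) * logDensity (E τ)) := by rw [hEτ]; ring
  calc ∑ τ ∈ Icc 1 t, 2 * lam τ ^ 2 * ε τ
      ≤ ∑ τ ∈ Icc 1 t, 2 / C ^ 2 * ((E τ - E (τ - 1)) * logDensity (E τ)) := sum_le_sum hterm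
    _ = 2 / C ^ 2 * ∑ τ ∈ Icc 1 t, (E τ - E (τ - 1)) * logDensity (E τ) := (mul_sum ..).symm
    _ ≤ 2 / C ^ 2 * (logPotential (E t) - logPotential (E 0)) := by
        gcongr
        exact sum_Icc_sub_mul_le_sub hE0.ge hE_mono (fun a b => sub_mul_logDensity_le) t
    _ ≤ 2 / C ^ 2 * 1 := by
        gcongr
        rw [hE0]
        exact logPotential_sub_logPotential_zero_le_one (hE0 ▸ hE_mono t.zero_le)
    _ ≤ 4 / C ^ 2 := by rw [mul_one]; gcongr; norm_num

theorem stmt_16 (ε : ℕ → ℝ) (C D : ℝ) (hC : 0 < C) (hD : 0 < D)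
    (hε0 : ∀ τ, 0 ≤ ε τ) (hεD : ∀ τ, ε τ ≤ D⁻¹ ^ 2)
    (γ lam : ℕ → ℝ)
    (hγ : ∀ τ : ℕ, γ τ = (∑ s ∈ Finset.Icc 1 (τ - 1), ε s) + D⁻¹ ^ 2)
    (hlam : ∀ τ, lam τ = 1 / (C * Real.sqrt (γ τ + 1) *
      Real.sqrt (Real.log (γ τ + 1) + 1) *
      (Real.log (Real.log (γ τ + 1) + 1) + 1))) :
    ∀ t : ℕ, 1 ≤ t →
      ∑ τ ∈ Finset.Icc 1 t, 2 * (lam τ) ^ 2 * ε τ ≤ 4 / C ^ 2 :=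
  stmt_16_general ε C D hε0 hεD γ lam hγ hlam
end
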